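/- arXiv:1903.03681 — 3 statements merged into one kernel-verified Lean document; each statement's English description precedes it below -/
import Mathlib

section
/- Let A be the free C-algebra on generators X, Y. Fix z_1,...,z_N ∈ C^* and define in the Clifford algebra Cl_N: Φ(X) = Σ_{i=1}^N z_1^{-1}···z_{i-1}^{-1} z_{i+1}···z_N a_i and Φ(Y) = Σ_{i=1}^N z_1^{-1}···z_{i-1}^{-1}(z_i^2−z_i^{-2}) z_{i+1}···z_N b_i. Then Φ(X)^2 = 0, Φ(Y)^2 = 0, and Φ(X)Φ(Y)+Φ(Y)Φ(X) = z^2 − z^{-2}, where z = z_1 z_2 ··· z_N. -/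
noncomputable section

open FreeAlgebra BigOperators

/-- The relations of the Clifford algebra `Cl_N` with generators
`a_i = inl i` and `b_i = inr i`. -/
inductive ClRel (N : ℕ) :
    FreeAlgebra ℂ (Fin N ⊕ Fin N) → FreeAlgebra ℂ (Fin N ⊕ Fin N) → Prop
  | aa (i j : Fin N) : ClRel N
      (ι ℂ (Sum.inl i) * ι ℂ (Sum.inl j) + ι ℂ (Sum.inl j) * ι ℂ (Sum.inl i)) 0
  | bb (i j : Fin N) : ClRel N
      (ι ℂ (Sum.inr i) * ι ℂ (Sum.inr j) + ι ℂ (Sum.inr j) * ι ℂ (Sum.inr i)) 0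
  | ab (i j : Fin N) : ClRel N
      (ι ℂ (Sum.inl i) * ι ℂ (Sum.inr j) + ι ℂ (Sum.inr j) * ι ℂ (Sum.inl i))
      (if i = j then 1 else 0)

/-- The Clifford algebra `Cl_N`. -/
abbrev Cl (N : ℕ) := RingQuot (ClRel N)

/-- The generator `a_i` of `Cl_N`. -/
def clA (N : ℕ) (i : Fin N) : Cl N :=
  RingQuot.mkAlgHom ℂ (ClRel N) (ι ℂ (Sum.inl i))

/-- The generator `b_i` of `Cl_N`. -/
def clB (N : ℕ) (i : Fin N) : Cl N :=
  RingQuot.mkAlgHom ℂ (ClRel N) (ι ℂ (Sum.inr i))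

/-- `Φ(X) = Σ_i z_1⁻¹ ⋯ z_{i-1}⁻¹ z_{i+1} ⋯ z_N a_i`. -/
def PhiX (N : ℕ) (z : Fin N → ℂ) : Cl N :=
  ∑ i : Fin N, ((∏ k ∈ Finset.Iio i, (z k)⁻¹) * ∏ k ∈ Finset.Ioi i, z k) • clA N i

/-- `Φ(Y) = Σ_i z_1⁻¹ ⋯ z_{i-1}⁻¹ (z_i² − z_i⁻²) z_{i+1} ⋯ z_N b_i`. -/
def PhiY (N : ℕ) (z : Fin N → ℂ) : Cl N :=
  ∑ i : Fin N, ((∏ k ∈ Finset.Iio i, (z k)⁻¹) * ((z i) ^ 2 - ((z i)⁻¹) ^ 2) *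
      ∏ k ∈ Finset.Ioi i, z k) • clB N i

lemma relA (N : ℕ) (i j : Fin N) : clA N i * clA N j + clA N j * clA N i = 0 := by
  have h := RingQuot.mkAlgHom_rel ℂ (ClRel.aa i j)
  simpa [clA, map_add, map_mul] using h

lemma relB (N : ℕ) (i j : Fin N) : clB N i * clB N j + clB N j * clB N i = 0 := by
  have h := RingQuot.mkAlgHom_rel ℂ (ClRel.bb i j)
  simpa [clB, map_add, map_mul] using h

lemma relAB (N : ℕ) (i j : Fin N) :
    clA N i * clB N j + clB N j * clA N i = if i = j then 1 else 0 := by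
  have h := RingQuot.mkAlgHom_rel ℂ (ClRel.ab i j)
  simpa [clA, clB, map_add, map_mul, apply_ite] using h

lemma sum_smul_anticomm (N : ℕ) (c d : Fin N → ℂ) (u v : Fin N → Cl N) :
    (∑ i, c i • u i) * (∑ j, d j • v j) + (∑ j, d j • v j) * (∑ i, c i • u i)
    = ∑ i, ∑ j, (c i * d j) • (u i * v j + v j * u i) := by
  simp only [Finset.sum_mul, Finset.mul_sum, smul_mul_smul_comm]
  rw [Finset.sum_comm (f := fun j i => (c i * d j) • (u i * v j))]
  rw [← Finset.sum_add_distrib]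
  refine Finset.sum_congr rfl fun i _ => ?_
  rw [← Finset.sum_add_distrib]
  refine Finset.sum_congr rfl fun j _ => ?_
  rw [mul_comm (d j), smul_add]

lemma eq_zero_of_add_self {M : Type*} [AddCommGroup M] [Module ℂ M] {x : M}
    (h : x + x = 0) : x = 0 := by
  have h2 : (2 : ℂ) • x = 0 := by rw [two_smul]; exact h
  have : x = (2 : ℂ)⁻¹ • ((2 : ℂ) • x) := by
    rw [smul_smul, inv_mul_cancel₀ two_ne_zero, one_smul]
  rw [this, h2, smul_zero]

lemma scalarsum (N : ℕ) (z : Fin N → ℂ) :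
    ∑ i : Fin N, ((∏ k ∈ Finset.Iio i, (z k)⁻¹) * ∏ k ∈ Finset.Ioi i, z k) *
      ((∏ k ∈ Finset.Iio i, (z k)⁻¹) * ((z i) ^ 2 - ((z i)⁻¹) ^ 2) *
        ∏ k ∈ Finset.Ioi i, z k) =
    (∏ i : Fin N, z i) ^ 2 - ((∏ i : Fin N, z i)⁻¹) ^ 2 := by
  set g : ℕ → ℂ := fun m =>
    (∏ k ∈ Finset.univ.filter (fun k : Fin N => (k : ℕ) < m), ((z k)⁻¹) ^ 2) *
      ∏ k ∈ Finset.univ.filter (fun k : Fin N => m ≤ (k : ℕ)), (z k) ^ 2 with hg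
  have key : ∀ i : Fin N,
      ((∏ k ∈ Finset.Iio i, (z k)⁻¹) * ∏ k ∈ Finset.Ioi i, z k) *
      ((∏ k ∈ Finset.Iio i, (z k)⁻¹) * ((z i) ^ 2 - ((z i)⁻¹) ^ 2) *
        ∏ k ∈ Finset.Ioi i, z k) = g i - g (i + 1) := by
    intro i
    have h1 : Finset.univ.filter (fun k : Fin N => (k : ℕ) < (i : ℕ)) = Finset.Iio i := by
      ext k
      simp only [Finset.mem_filter, Finset.mem_univ, true_and, Finset.mem_Iio, Fin.lt_def]
    have h2 : Finset.univ.filter (fun k : Fin N => (i : ℕ) ≤ (k : ℕ)) = Finset.Ici i := by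
      ext k
      simp only [Finset.mem_filter, Finset.mem_univ, true_and, Finset.mem_Ici, Fin.le_def]
    have h3 : Finset.univ.filter (fun k : Fin N => (k : ℕ) < (i : ℕ) + 1) = Finset.Iic i := by
      ext k
      simp only [Finset.mem_filter, Finset.mem_univ, true_and, Finset.mem_Iic, Fin.le_def,
        Nat.lt_succ_iff]
    have h4 : Finset.univ.filter (fun k : Fin N => (i : ℕ) + 1 ≤ (k : ℕ)) = Finset.Ioi i := by
      ext k
      simp only [Finset.mem_filter, Finset.mem_univ, true_and, Finset.mem_Ioi, Fin.lt_def,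
        Nat.succ_le_iff]
    have e1 : Finset.Ici i = insert i (Finset.Ioi i) := by rw [Finset.Ioi_insert]
    have e2 : Finset.Iic i = insert i (Finset.Iio i) := by rw [Finset.Iio_insert]
    rw [hg]
    simp only [h1, h2, h3, h4, e1, e2,
      Finset.prod_insert (Finset.notMem_Ioi_self), Finset.prod_insert (Finset.notMem_Iio_self),
      Finset.prod_pow]
    ring
  rw [Finset.sum_congr rfl (fun i _ => key i),
    Fin.sum_univ_eq_sum_range (fun m => g m - g (m + 1)), Finset.sum_range_sub' g]
  have h5 : Finset.univ.filter (fun k : Fin N => (k : ℕ) < N) = Finset.univ := by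
    ext k
    simp only [Finset.mem_filter, Finset.mem_univ, true_and, iff_true]
    exact k.isLt
  have h6 : Finset.univ.filter (fun k : Fin N => N ≤ (k : ℕ)) = ∅ := by
    ext k
    simp only [Finset.mem_filter, Finset.mem_univ, true_and, Finset.notMem_empty, iff_false]
    exact Nat.not_le.mpr k.isLt
  have g0 : g 0 = (∏ i : Fin N, z i) ^ 2 := by
    simp [hg, Finset.prod_pow]
  have gN : g N = ((∏ i : Fin N, z i)⁻¹) ^ 2 := by
    simp [hg, h5, h6, Finset.prod_pow]
  rw [g0, gN]

/-- `Φ(X)² = 0`, `Φ(Y)² = 0`, and `Φ(X)Φ(Y) + Φ(Y)Φ(X) = z² − z⁻²` where `z = z_1 ⋯ z_N`;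
equivalently, `X ↦ Φ(X)`, `Y ↦ Φ(Y)` defines an algebra map from the free algebra on `X, Y`
modulo these relations. -/
theorem PhiX_sq_PhiY_sq_anticommutator (N : ℕ) (z : Fin N → ℂ) (hz : ∀ i, z i ≠ 0) :
    PhiX N z * PhiX N z = 0 ∧
    PhiY N z * PhiY N z = 0 ∧
    PhiX N z * PhiY N z + PhiY N z * PhiX N z =
      ((∏ i : Fin N, z i) ^ 2 - ((∏ i : Fin N, z i)⁻¹) ^ 2) • (1 : Cl N) := by
  refine ⟨?_, ?_, ?_⟩
  · apply eq_zero_of_add_self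
    rw [PhiX, sum_smul_anticomm]
    simp [relA]
  · apply eq_zero_of_add_self
    rw [PhiY, sum_smul_anticomm]
    simp [relB]
  · rw [PhiX, PhiY, sum_smul_anticomm]
    simp only [relAB, smul_ite, smul_zero]
    rw [Finset.sum_congr rfl (fun i _ => Finset.sum_ite_eq Finset.univ i _)]
    simp only [Finset.mem_univ, if_true]
    rw [← Finset.sum_smul, scalarsum]
end
end

section
/- For each i, the 2×2 matrix over C given by M_i = [[0, z_i^{-4}],[1, 1 − z_{i+1}^{-4}]] acting on coordinates (i, i+1) of C^N (identity elsewhere), where the colors z_1,...,z_N ∈ C^* get permuted by the braid action, defines a representation of the colored braid groupoid: the colored braid relation M_i(a,b)·M_{i+1}(a,c)·M_i(b,c) = M_{i+1}(b,c)·M_i(a,c)·M_{i+1}(a,b) holds for all colors a,b,c ∈ C^*, and M_i and M_j commute for |i−j| ≥ 2. -/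
/-!
Each `M_i(a,b)` is the identity plus a combination of the matrix units `E_pq` with
`p, q ∈ {i, i+1}`. Expanding products with `E_pq E_rs = δ_qr E_ps` turns the colored braid
relation into a polynomial identity in `a⁻⁴, b⁻⁴, c⁻⁴` over three indices, and makes the
far commutation immediate, since blocks on disjoint index pairs multiply to zero.
-/

noncomputable section

open Matrix

/-- The colored Burau matrix `M_i(a,b)`: the identity except in rows/columns `i, i+1`,
where it is the 2×2 block `[[0, a⁻⁴],[1, 1 − b⁻⁴]]`; here `a, b` are the colors of the
strands `i` and `i+1` before the crossing. -/
def cburau (N : ℕ) (i : ℕ) (a b : ℂ) : Matrix (Fin N) (Fin N) ℂ :=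
  Matrix.of fun j k =>
    if (j : ℕ) = i ∧ (k : ℕ) = i then 0
    else if (j : ℕ) = i ∧ (k : ℕ) = i + 1 then (a⁻¹) ^ 4
    else if (j : ℕ) = i + 1 ∧ (k : ℕ) = i then 1
    else if (j : ℕ) = i + 1 ∧ (k : ℕ) = i + 1 then 1 - (b⁻¹) ^ 4
    else if j = k then 1 else 0

theorem Matrix.vecMulLinear_mul {l m n R : Type*} [Fintype l] [Fintype m] [CommSemiring R]
    (M : Matrix l m R) (N : Matrix m n R) :
    (M * N).vecMulLinear = N.vecMulLinear ∘ₗ M.vecMulLinear :=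
  LinearMap.ext fun v => (vecMul_vecMul v M N).symm

section BurauBlock

variable {n R : Type*} [Fintype n] [DecidableEq n] [CommRing R]

/-- The identity matrix with the block `[[0, x], [1, 1 - y]]` in rows/columns `p, q`. -/
def burauBlock (p q : n) (x y : R) : Matrix n n R :=
  1 - single p p 1 + x • single p q 1 + single q p 1 - y • single q q 1

theorem burauBlock_braid {p q r : n} (hpq : p ≠ q) (hpr : p ≠ r) (hqr : q ≠ r) (x y z : R) :
    burauBlock p q y z * burauBlock q r x z * burauBlock p q x y =
      burauBlock q r x y * burauBlock p q x z * burauBlock q r y z := by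
  simp only [burauBlock, sub_mul, mul_sub, add_mul, mul_add, one_mul, mul_one, smul_mul_assoc,
    mul_smul_comm, single_mul_single_same, single_mul_single_of_ne, hpq, hpr, hqr, hpq.symm,
    hpr.symm, hqr.symm, ne_eq, not_false_eq_true, smul_zero, sub_zero, add_zero]
  module

theorem burauBlock_commute {p q r s : n} (hpr : p ≠ r) (hps : p ≠ s) (hqr : q ≠ r)
    (hqs : q ≠ s) (x y z w : R) : Commute (burauBlock p q x y) (burauBlock r s z w) := by
  simp only [Commute, SemiconjBy, burauBlock, sub_mul, mul_sub, add_mul, mul_add, one_mul,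
    mul_one, smul_mul_assoc, mul_smul_comm, single_mul_single_of_ne, hpr, hps, hqr, hqs,
    hpr.symm, hps.symm, hqr.symm, hqs.symm, ne_eq, not_false_eq_true, smul_zero, sub_zero,
    add_zero]
  module

end BurauBlock

theorem cburau_eq_burauBlock {N i : ℕ} (h : i + 1 < N) (a b : ℂ) :
    cburau N i a b = burauBlock ⟨i, by omega⟩ ⟨i + 1, h⟩ (a⁻¹ ^ 4) (b⁻¹ ^ 4) := by
  ext j k
  simp only [cburau, burauBlock, of_apply, Matrix.add_apply, Matrix.sub_apply,
    Matrix.smul_apply, one_apply, single_apply, Fin.ext_iff, smul_eq_mul]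
  split_ifs <;> first | omega | ring

/-- The colored Burau matrices define a representation of the colored braid groupoid:
as operators (acting on row vectors, composed in the given order) they satisfy the colored
braid relation `M_i(a,b)·M_{i+1}(a,c)·M_i(b,c) = M_{i+1}(b,c)·M_i(a,c)·M_{i+1}(a,b)`,
and far-apart generators commute. -/
theorem cburau_colored_braid_relations (N : ℕ) :
    (∀ i : ℕ, i + 2 < N → ∀ a b c : ℂ, a ≠ 0 → b ≠ 0 → c ≠ 0 →
      (cburau N i a b).vecMulLinear ∘ₗ (cburau N (i + 1) a c).vecMulLinear ∘ₗ
          (cburau N i b c).vecMulLinear =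
        (cburau N (i + 1) b c).vecMulLinear ∘ₗ (cburau N i a c).vecMulLinear ∘ₗ
          (cburau N (i + 1) a b).vecMulLinear) ∧
    (∀ i j : ℕ, i + 2 ≤ j → j + 1 < N → ∀ a b c d : ℂ, a ≠ 0 → b ≠ 0 → c ≠ 0 → d ≠ 0 →
      (cburau N i a b).vecMulLinear ∘ₗ (cburau N j c d).vecMulLinear =
        (cburau N j c d).vecMulLinear ∘ₗ (cburau N i a b).vecMulLinear) := by
  refine ⟨fun i hi a b c _ _ _ => ?_, fun i j hij hj a b c d _ _ _ _ => ?_⟩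
  · simp only [← vecMulLinear_mul, cburau_eq_burauBlock (by omega : i + 1 < N),
      cburau_eq_burauBlock hi]
    refine congrArg _ (burauBlock_braid ?_ ?_ ?_ _ _ _) <;> simp only [ne_eq, Fin.ext_iff] <;> omega
  · simp only [← vecMulLinear_mul, cburau_eq_burauBlock (by omega : i + 1 < N),
      cburau_eq_burauBlock hj]
    refine congrArg _ (burauBlock_commute ?_ ?_ ?_ ?_ _ _ _ _).eq <;> simp only [ne_eq, Fin.ext_iff] <;> omega
end
end

section
/- With the maps φ and ψ defined below between V_{z_1z_2,n+m} ⊕ V_{z_1z_2,n+m+1} and V_{z_1,n} ⊗ V_{z_2,m}, one has ψ ∘ φ = id and φ ∘ ψ = id. Here, with γ = (z_1^2 z_2^2 − z_1^{-2} z_2^{-2})^{-1}: φ(w_1) = v_1⊗v_2, φ(Xw_1) = z_2 Xv_1⊗v_2 + (−1)^n z_1^{-1} v_1⊗Xv_2, φ(w_2) = (−1)^{n+1} z_1^{-1}(z_2^2−z_2^{-2})γ Xv_1⊗v_2 + z_2(z_1^2−z_1^{-2})γ v_1⊗Xv_2, φ(Xw_2) = Xv_1⊗Xv_2; and ψ(v_1⊗v_2)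 = w_1, ψ(Xv_1⊗v_2) = z_2(z_1^2−z_1^{-2})γ Xw_1 + (−1)^{n+1} z_1^{-1} w_2, ψ(v_1⊗Xv_2) = (−1)^n z_1^{-1}(z_2^2−z_2^{-2})γ Xw_1 + z_2 w_2, ψ(Xv_1⊗Xv_2) = Xw_2. -/
noncomputable section

open Matrix

/-- `γ = (z₁²z₂² − z₁⁻²z₂⁻²)⁻¹`. -/
def gam (z₁ z₂ : ℂ) : ℂ := (z₁ ^ 2 * z₂ ^ 2 - (z₁⁻¹) ^ 2 * (z₂⁻¹) ^ 2)⁻¹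

/-- The matrix of `φ : V_{z₁z₂,n+m} ⊕ V_{z₁z₂,n+m+1} → V_{z₁,n} ⊗ V_{z₂,m}`, with rows
indexed by the tensor basis `(v₁⊗v₂, v₁⊗Xv₂, Xv₁⊗v₂, Xv₁⊗Xv₂)` and columns by
`(w₁, Xw₁, w₂, Xw₂)`. -/
def phiMat (z₁ z₂ : ℂ) (n : ℤ) : Matrix (Fin 4) (Fin 4) ℂ :=
  !![1, 0, 0, 0;
     0, (-1 : ℂ) ^ n * z₁⁻¹, z₂ * (z₁ ^ 2 - (z₁⁻¹) ^ 2) * gam z₁ z₂, 0;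
     0, z₂, -((-1 : ℂ) ^ n) * z₁⁻¹ * (z₂ ^ 2 - (z₂⁻¹) ^ 2) * gam z₁ z₂, 0;
     0, 0, 0, 1]

/-- The matrix of `ψ : V_{z₁,n} ⊗ V_{z₂,m} → V_{z₁z₂,n+m} ⊕ V_{z₁z₂,n+m+1}`, with rows
indexed by `(w₁, Xw₁, w₂, Xw₂)` and columns by the tensor basis. -/
def psiMat (z₁ z₂ : ℂ) (n : ℤ) : Matrix (Fin 4) (Fin 4) ℂ :=
  !![1, 0, 0, 0;
     0, (-1 : ℂ) ^ n * z₁⁻¹ * (z₂ ^ 2 - (z₂⁻¹) ^ 2) * gam z₁ z₂,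
        z₂ * (z₁ ^ 2 - (z₁⁻¹) ^ 2) * gam z₁ z₂, 0;
     0, z₂, -((-1 : ℂ) ^ n) * z₁⁻¹, 0;
     0, 0, 0, 1]

/-!
The two matrices are block diagonal: both fix the extreme basis vectors, and on the middle
two coordinates the block of `ψ` is minus the adjugate of the block of `φ`. That block of `φ`
has determinant `-γ (z₁²z₂² − z₁⁻²z₂⁻²) = -1`, the sign `(-1)ⁿ` entering only through its square,
so the two blocks are mutually inverse.
-/

section MiddleBlock

variable {R : Type*} [Semiring R]

def middleBlock (A : Matrix (Fin 2) (Fin 2) R) : Matrix (Fin 4) (Fin 4) R :=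
  !![1, 0, 0, 0;
     0, A 0 0, A 0 1, 0;
     0, A 1 0, A 1 1, 0;
     0, 0, 0, 1]

theorem middleBlock_mul (A B : Matrix (Fin 2) (Fin 2) R) :
    middleBlock A * middleBlock B = middleBlock (A * B) := by
  ext i j
  fin_cases i <;> fin_cases j <;>
    simp [middleBlock, Matrix.mul_apply, Fin.sum_univ_four, Fin.sum_univ_two]

theorem middleBlock_one : middleBlock (1 : Matrix (Fin 2) (Fin 2) R) = 1 := by
  ext i j
  fin_cases i <;> fin_cases j <;> simp [middleBlock]

end MiddleBlock

section Blocks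

variable (z₁ z₂ ε : ℂ)

def phiBlock : Matrix (Fin 2) (Fin 2) ℂ :=
  !![ε * z₁⁻¹, z₂ * (z₁ ^ 2 - (z₁⁻¹) ^ 2) * gam z₁ z₂;
     z₂, -ε * z₁⁻¹ * (z₂ ^ 2 - (z₂⁻¹) ^ 2) * gam z₁ z₂]

def psiBlock : Matrix (Fin 2) (Fin 2) ℂ :=
  !![ε * z₁⁻¹ * (z₂ ^ 2 - (z₂⁻¹) ^ 2) * gam z₁ z₂, z₂ * (z₁ ^ 2 - (z₁⁻¹) ^ 2) * gam z₁ z₂;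
     z₂, -ε * z₁⁻¹]

theorem phiMat_eq_middleBlock (n : ℤ) :
    phiMat z₁ z₂ n = middleBlock (phiBlock z₁ z₂ ((-1) ^ n)) := by
  ext i j
  fin_cases i <;> fin_cases j <;> rfl

theorem psiMat_eq_middleBlock (n : ℤ) :
    psiMat z₁ z₂ n = middleBlock (psiBlock z₁ z₂ ((-1) ^ n)) := by
  ext i j
  fin_cases i <;> fin_cases j <;> rfl

theorem psiBlock_eq_neg_adjugate : psiBlock z₁ z₂ ε = -(phiBlock z₁ z₂ ε).adjugate := by
  rw [phiBlock, psiBlock, adjugate_fin_two_of]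
  ext i j
  fin_cases i <;> fin_cases j <;> simp

variable {z₁ z₂ ε}

theorem det_phiBlock (hε : ε ^ 2 = 1)
    (hγ : z₁ ^ 2 * z₂ ^ 2 - (z₁⁻¹) ^ 2 * (z₂⁻¹) ^ 2 ≠ 0) :
    (phiBlock z₁ z₂ ε).det = -1 := by
  have hgam : (z₁ ^ 2 * z₂ ^ 2 - (z₁⁻¹) ^ 2 * (z₂⁻¹) ^ 2) * gam z₁ z₂ = 1 :=
    mul_inv_cancel₀ hγ
  rw [phiBlock, det_fin_two_of]
  linear_combination (-(z₁⁻¹) ^ 2 * (z₂ ^ 2 - (z₂⁻¹) ^ 2) * gam z₁ z₂) * hε - hgam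

theorem psiBlock_mul_phiBlock (hε : ε ^ 2 = 1)
    (hγ : z₁ ^ 2 * z₂ ^ 2 - (z₁⁻¹) ^ 2 * (z₂⁻¹) ^ 2 ≠ 0) :
    psiBlock z₁ z₂ ε * phiBlock z₁ z₂ ε = 1 := by
  rw [psiBlock_eq_neg_adjugate, neg_mul, adjugate_mul, det_phiBlock hε hγ, neg_one_smul,
    neg_neg]

end Blocks

theorem psi_phi_inverse_general (z₁ z₂ : ℂ)
    (hγ : z₁ ^ 2 * z₂ ^ 2 - (z₁⁻¹) ^ 2 * (z₂⁻¹) ^ 2 ≠ 0) (n : ℤ) :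
    psiMat z₁ z₂ n * phiMat z₁ z₂ n = 1 ∧ phiMat z₁ z₂ n * psiMat z₁ z₂ n = 1 := by
  have hsign : ((-1 : ℂ) ^ n) ^ 2 = 1 := by
    rw [← zpow_natCast, ← _root_.zpow_mul, mul_comm, _root_.zpow_mul]
    norm_num
  have hpsiphi : psiMat z₁ z₂ n * phiMat z₁ z₂ n = 1 := by
    rw [phiMat_eq_middleBlock, psiMat_eq_middleBlock, middleBlock_mul,
      psiBlock_mul_phiBlock hsign hγ, middleBlock_one]
  exact ⟨hpsiphi, mul_eq_one_comm.mp hpsiphi⟩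

/-- `ψ ∘ φ = id` and `φ ∘ ψ = id`. -/
theorem psi_phi_inverse (z₁ z₂ : ℂ) (h₁ : z₁ ≠ 0) (h₂ : z₂ ≠ 0)
    (hγ : z₁ ^ 2 * z₂ ^ 2 - (z₁⁻¹) ^ 2 * (z₂⁻¹) ^ 2 ≠ 0) (n : ℤ) :
    psiMat z₁ z₂ n * phiMat z₁ z₂ n = 1 ∧ phiMat z₁ z₂ n * psiMat z₁ z₂ n = 1 :=
  psi_phi_inverse_general z₁ z₂ hγ n
end
end
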